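/- In the polynomial ring $\mathbb{Q}[t_1, t_2, t_3, t_4]$, the ideal generated by the set $\{\, t_1^k + t_2^k - t_3^k - t_4^k \mid k \ge 1 \,\} \cup \{\, t_2^k - t_4^k \mid k \ge 1 \,\}$ equals the ideal $(t_1 - t_3,\; t_2 - t_4)$. In particular, the vanishing locus of this ideal in $\mathbb{A}^4$ is a $2$-dimensional affine plane. -/
import Mathlib


open MvPolynomial

/-- In `ℚ[t₁,t₂,t₃,t₄]`, the ideal generated by `t₁ᵏ + t₂ᵏ - t₃ᵏ - t₄ᵏ` and
`t₂ᵏ - t₄ᵏ` for all `k ≥ 1` equals the ideal `(t₁ - t₃, t₂ - t₄)`.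
In particular its vanishing locus in `𝔸⁴` is the 2-dimensional plane
`{t₁ = t₃, t₂ = t₄}`, parametrized bijectively (linearly) by `ℚ²`. -/
theorem stmt_4 :
    Ideal.span ({p : MvPolynomial (Fin 4) ℚ |
        ∃ k : ℕ, 1 ≤ k ∧ p = X 0 ^ k + X 1 ^ k - X 2 ^ k - X 3 ^ k} ∪
      {p : MvPolynomial (Fin 4) ℚ | ∃ k : ℕ, 1 ≤ k ∧ p = X 1 ^ k - X 3 ^ k}) =
      Ideal.span {X 0 - X 2, X 1 - X 3} ∧
    {t : Fin 4 → ℚ | ∀ k : ℕ, 1 ≤ k →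
        t 0 ^ k + t 1 ^ k - t 2 ^ k - t 3 ^ k = 0 ∧ t 1 ^ k - t 3 ^ k = 0} =
      Set.range (fun ab : ℚ × ℚ => ![ab.1, ab.2, ab.1, ab.2]) ∧
    Function.Injective (fun ab : ℚ × ℚ => ![ab.1, ab.2, ab.1, ab.2]) := by
  refine ⟨?_, ?_, ?_⟩
  · apply le_antisymm
    · rw [Ideal.span_le]
      rintro p (⟨k, hk, rfl⟩ | ⟨k, hk, rfl⟩)
      · obtain ⟨c, hc⟩ := sub_dvd_pow_sub_pow (X 0 : MvPolynomial (Fin 4) ℚ) (X 2) k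
        obtain ⟨d, hd⟩ := sub_dvd_pow_sub_pow (X 1 : MvPolynomial (Fin 4) ℚ) (X 3) k
        rw [SetLike.mem_coe, Ideal.mem_span_pair]
        refine ⟨c, d, ?_⟩
        rw [mul_comm c, ← hc, mul_comm d, ← hd]; ring
      · obtain ⟨d, hd⟩ := sub_dvd_pow_sub_pow (X 1 : MvPolynomial (Fin 4) ℚ) (X 3) k
        rw [SetLike.mem_coe, Ideal.mem_span_pair]
        exact ⟨0, d, by rw [mul_comm d, ← hd]; ring⟩
    · rw [Ideal.span_le]
      have h1 : (X 1 - X 3 : MvPolynomial (Fin 4) ℚ) ∈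
          Ideal.span ({p : MvPolynomial (Fin 4) ℚ |
            ∃ k : ℕ, 1 ≤ k ∧ p = X 0 ^ k + X 1 ^ k - X 2 ^ k - X 3 ^ k} ∪
          {p : MvPolynomial (Fin 4) ℚ | ∃ k : ℕ, 1 ≤ k ∧ p = X 1 ^ k - X 3 ^ k}) :=
        Ideal.subset_span (Or.inr ⟨1, le_refl 1, by ring⟩)
      have h2 : (X 0 + X 1 - X 2 - X 3 : MvPolynomial (Fin 4) ℚ) ∈
          Ideal.span ({p : MvPolynomial (Fin 4) ℚ |
            ∃ k : ℕ, 1 ≤ k ∧ p = X 0 ^ k + X 1 ^ k - X 2 ^ k - X 3 ^ k} ∪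
          {p : MvPolynomial (Fin 4) ℚ | ∃ k : ℕ, 1 ≤ k ∧ p = X 1 ^ k - X 3 ^ k}) :=
        Ideal.subset_span (Or.inl ⟨1, le_refl 1, by ring⟩)
      rintro p hp
      rcases hp with rfl | hp
      · have : (X 0 - X 2 : MvPolynomial (Fin 4) ℚ) =
            (X 0 + X 1 - X 2 - X 3) - (X 1 - X 3) := by ring
        rw [this]
        exact Ideal.sub_mem _ h2 h1
      · rcases hp with rfl
        exact h1
  · ext t
    constructor
    · intro h
      obtain ⟨ha, hb⟩ := h 1 le_rfl
      simp only [pow_one] at ha hb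
      refine ⟨(t 0, t 1), ?_⟩
      funext i
      fin_cases i <;> simp <;> linarith
    · rintro ⟨⟨a, b⟩, rfl⟩ k hk
      constructor <;> simp
  · rintro ⟨a, b⟩ ⟨c, d⟩ h
    simp only at h
    have h0 := congrFun h 0
    have h1 := congrFun h 1
    simp at h0 h1
    simp [h0, h1]
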